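/- arXiv:1602.00246 — 6 statements merged into one kernel-verified Lean document; each statement's English description precedes it below -/
import Mathlib

section
/- For every positive integer h, every antichain sequence s_1, …, s_L in ℤ_{≥0}^2 whose degree growth is bounded by the function i ↦ f(1,h)_i satisfies L ≤ h + 1. (This is the paper's computation of the maximal antichain length for m = 2 and n = 1.) -/
/-!
Every other member of an antichain through `p = s₁` is incomparable with `p`, so it lies
strictly left of `p` or strictly below it. In an antichain of `ℕ × ℕ` distinct points have
distinct first and distinct second coordinates, so at most `p.1` points lie left of `p` and at
most `p.2` below it. Hence the antichain has at most `deg p + 1 ≤ f(1,h)₁ + 1 = h + 1` elements.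
-/

/-- The sequence `f(n,h)_k` from the paper: `f(n,h)_0 = 0`, `f(n,h)_1 = f(n,h)_2 = h`,
`f(n,h)_k = f(n,h)_{k-1} + f(n,h)_{k-2}` for `3 ≤ k ≤ n+1`, and
`f(n,h)_k = f(n,h)_{k-1} + f(n,h)_{k-2} - 1` for `k > n+1`. -/
def fseq (n h : ℕ) : ℕ → ℕ
  | 0 => 0
  | 1 => h
  | 2 => h
  | (k+3) =>
    if k + 3 ≤ n + 1 then fseq n h (k+2) + fseq n h (k+1)
    else fseq n h (k+2) + fseq n h (k+1) - 1

theorem IsAntichain.injOn_fst {α β : Type*} [Preorder α] [LinearOrder β] {S : Set (α × β)}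
    (hS : IsAntichain (· ≤ ·) S) : S.InjOn Prod.fst := by
  intro q hq r hr hqr
  by_contra hne
  rcases le_total q.2 r.2 with h | h
  · exact hS hq hr hne (Prod.le_def.2 ⟨hqr.le, h⟩)
  · exact hS hr hq (Ne.symm hne) (Prod.le_def.2 ⟨hqr.ge, h⟩)

theorem IsAntichain.injOn_snd {α β : Type*} [LinearOrder α] [Preorder β] {S : Set (α × β)}
    (hS : IsAntichain (· ≤ ·) S) : S.InjOn Prod.snd := by
  intro q hq r hr hqr
  by_contra hne
  rcases le_total q.1 r.1 with h | h
  · exact hS hq hr hne (Prod.le_def.2 ⟨h, hqr.le⟩)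
  · exact hS hr hq (Ne.symm hne) (Prod.le_def.2 ⟨h, hqr.ge⟩)

theorem IsAntichain.card_le_of_mem {S : Finset (ℕ × ℕ)}
    (hS : IsAntichain (· ≤ ·) (S : Set (ℕ × ℕ))) {p : ℕ × ℕ} (hp : p ∈ S) :
    S.card ≤ p.1 + p.2 + 1 := by
  have hcover : S ⊆ {p} ∪ S.filter (·.1 < p.1) ∪ S.filter (·.2 < p.2) := by
    intro q hq
    by_cases hqp : q = p
    · simp [hqp]
    have hincomp : ¬ p ≤ q := hS hp hq (Ne.symm hqp)
    rw [Prod.le_def] at hincomp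
    simp only [Finset.mem_union, Finset.mem_singleton, Finset.mem_filter, hq, true_and]
    omega
  have hleft : (S.filter (·.1 < p.1)).card ≤ p.1 := by
    simpa using Finset.card_le_card_of_injOn Prod.fst (t := Finset.range p.1)
      (fun q hq => by simpa using (Finset.mem_filter.1 hq).2)
      (hS.subset (Finset.coe_subset.2 (Finset.filter_subset _ _))).injOn_fst
  have hbelow : (S.filter (·.2 < p.2)).card ≤ p.2 := by
    simpa using Finset.card_le_card_of_injOn Prod.snd (t := Finset.range p.2)
      (fun q hq => by simpa using (Finset.mem_filter.1 hq).2)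
      (hS.subset (Finset.coe_subset.2 (Finset.filter_subset _ _))).injOn_snd
  calc S.card ≤ ({p} ∪ S.filter (·.1 < p.1) ∪ S.filter (·.2 < p.2)).card :=
        Finset.card_le_card hcover
    _ ≤ 1 + (S.filter (·.1 < p.1)).card + (S.filter (·.2 < p.2)).card := by
      grw [Finset.card_union_le, Finset.card_union_le, Finset.card_singleton]
    _ ≤ p.1 + p.2 + 1 := by omega

theorem antichain_length_le_of_degree_growth_fseq_one_general
    (h : ℕ) (L : ℕ) (s : Fin L → ℕ × ℕ)
    (hanti : ∀ i j : Fin L, i ≠ j → ¬ s i ≤ s j)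
    (hdeg : ∀ i : Fin L, (s i).1 + (s i).2 ≤ fseq 1 h (i.val + 1)) :
    L ≤ h + 1 := by
  rcases Nat.eq_zero_or_pos L with hL | hL
  · omega
  have hinj : Function.Injective s := fun i j hij => by
    by_contra hne
    exact hanti i j hne hij.le
  have himage : IsAntichain (· ≤ ·) (Finset.univ.image s : Set (ℕ × ℕ)) := by
    simp only [Finset.coe_image, Finset.coe_univ, Set.image_univ]
    rintro _ ⟨i, rfl⟩ _ ⟨j, rfl⟩ hne
    exact hanti i j (fun hij => hne (congrArg s hij))
  have hfirst : (s ⟨0, hL⟩).1 + (s ⟨0, hL⟩).2 ≤ h := hdeg ⟨0, hL⟩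
  calc L = (Finset.univ.image s).card := by rw [Finset.card_image_of_injective _ hinj]; simp
    _ ≤ (s ⟨0, hL⟩).1 + (s ⟨0, hL⟩).2 + 1 := himage.card_le_of_mem (by simp)
    _ ≤ h + 1 := by omega

/-- Every antichain sequence `s_1, …, s_L` in `ℤ_{≥0}^2` (componentwise order) whose
degree growth is bounded by `i ↦ f(1,h)_i` satisfies `L ≤ h + 1`. -/
theorem antichain_length_le_of_degree_growth_fseq_one
    (h : ℕ) (hh : 1 ≤ h) (L : ℕ) (s : Fin L → ℕ × ℕ)
    (hanti : ∀ i j : Fin L, i ≠ j → ¬ s i ≤ s j)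
    (hdeg : ∀ i : Fin L, (s i).1 + (s i).2 ≤ fseq 1 h (i.val + 1)) :
    L ≤ h + 1 :=
  antichain_length_le_of_degree_growth_fseq_one_general h L s hanti hdeg
end

section
/- Let n ≥ 1 and h ≥ 1 be integers, and let (F, J) be any (n,h)-jump sequence. Then F_k ≤ f(n,h)_k for all k ≥ 0. Equivalently, among all (n,h)-jump sequences, the one with jump index set {3, 4, …, n+1} (which is exactly the sequence f(n,h)) is pointwise largest. -/
/-- An `(n,h)`-jump sequence: an integer sequence `F` together with a set `J ⊆ {3, 4, …}`
of jump indices of cardinality at most `n - 1`, with `F 0 = 0`, `F 1 = F 2 = h`,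
`F k = F (k-1) + F (k-2)` for `k ∈ J`, and `F k = F (k-1) + F (k-2) - 1` for
`k ≥ 3` with `k ∉ J`. -/
def IsJumpSeq (n h : ℕ) (F : ℕ → ℤ) (J : Finset ℕ) : Prop :=
  (∀ j ∈ J, 3 ≤ j) ∧ J.card ≤ n - 1 ∧
  F 0 = 0 ∧ F 1 = (h : ℤ) ∧ F 2 = (h : ℤ) ∧
  (∀ k, 3 ≤ k → k ∈ J → F k = F (k - 1) + F (k - 2)) ∧
  (∀ k, 3 ≤ k → k ∉ J → F k = F (k - 1) + F (k - 2) - 1)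

/-!
Two sequences obeying the Fibonacci recurrence with increments, `F (k+2) = F (k+1) + F k + a k`
and `G (k+2) = G (k+1) + G k + b k`, are compared through their difference `D = G - F`,
which obeys the same recurrence with increments `b - a`. If `F ≤ G` at `0` and `1` and every
prefix sum of `a` is at most the corresponding prefix sum of `b`, then by induction
`D (k+1)` is at least the `k`-th prefix sum of `b - a`, hence `D ≥ 0`.

A jump sequence has increment `-1` off its jump set and `0` on it, so the prefix sums compare the
numbers of jumps among the first indices. Putting all `n - 1` admissible jumps at the start,
as `f(n,h)` does, maximizes every such count.
-/

open Finset

theorem le_of_add_two_eq_add_add {F G a b : ℕ → ℤ}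
    (hF : ∀ k, F (k + 2) = F (k + 1) + F k + a k) (hG : ∀ k, G (k + 2) = G (k + 1) + G k + b k)
    (h₀ : F 0 ≤ G 0) (h₁ : F 1 ≤ G 1) (hab : ∀ k, ∑ i ∈ range k, a i ≤ ∑ i ∈ range k, b i)
    (k : ℕ) : F k ≤ G k := by
  have key : ∀ k, F k ≤ G k ∧ ∑ i ∈ range k, (b i - a i) ≤ G (k + 1) - F (k + 1) := by
    intro k
    induction k with
    | zero => simpa using ⟨h₀, h₁⟩
    | succ k ih =>
      have hk := hab k
      rw [sum_sub_distrib] at ih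
      rw [sum_range_succ, sum_sub_distrib, hF, hG]
      constructor <;> linarith
  exact (key k).1

theorem card_filter_range_add_mem_le (J : Finset ℕ) (c k : ℕ) :
    #{i ∈ range k | i + c ∈ J} ≤ min k #J := by
  refine le_min ((card_filter_le _ _).trans (card_range k).le) ?_
  exact card_le_card_of_injOn (· + c) (fun i hi => (mem_filter.mp hi).2)
    (fun i _ j _ hij => by simpa using hij)

theorem filter_range_add_three_mem_Icc (n k : ℕ) :
    {i ∈ range k | i + 3 ∈ Icc 3 (n + 1)} = range (min k (n - 1)) := by
  ext i
  simp only [mem_filter, mem_range, mem_Icc]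
  omega

theorem isJumpSeq_iff {n h : ℕ} {F : ℕ → ℤ} {J : Finset ℕ} :
    IsJumpSeq n h F J ↔ (∀ j ∈ J, 3 ≤ j) ∧ #J ≤ n - 1 ∧ F 0 = 0 ∧ F 1 = h ∧ F 2 = h ∧
      ∀ k, F (k + 3) = F (k + 2) + F (k + 1) + ((if k + 3 ∈ J then 1 else 0) - 1) := by
  unfold IsJumpSeq
  refine and_congr_right' <| and_congr_right' <| and_congr_right' <| and_congr_right' <|
    and_congr_right' ⟨fun ⟨hjump, hskip⟩ k => ?_, fun hrec => ⟨fun k hk hkJ => ?_, fun k hk hkJ => ?_⟩⟩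
  · split_ifs with hk
    · have : F (k + 3) = F (k + 2) + F (k + 1) := hjump _ (by omega) hk
      rw [this]; ring
    · have : F (k + 3) = F (k + 2) + F (k + 1) - 1 := hskip _ (by omega) hk
      rw [this]; ring
  · obtain ⟨k, rfl⟩ := Nat.exists_eq_add_of_le' hk
    show F (k + 3) = F (k + 2) + F (k + 1)
    rw [hrec, if_pos hkJ]; ring
  · obtain ⟨k, rfl⟩ := Nat.exists_eq_add_of_le' hk
    show F (k + 3) = F (k + 2) + F (k + 1) - 1
    rw [hrec, if_neg hkJ]; ring

namespace IsJumpSeq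

variable {n h : ℕ} {F : ℕ → ℤ} {J : Finset ℕ}

theorem add_three (hF : IsJumpSeq n h F J) (k : ℕ) :
    F (k + 3) = F (k + 2) + F (k + 1) + ((if k + 3 ∈ J then 1 else 0) - 1) :=
  (isJumpSeq_iff.mp hF).2.2.2.2.2 k

theorem le_of_card_filter_le {n' : ℕ} {G : ℕ → ℤ} {J' : Finset ℕ} (hF : IsJumpSeq n h F J)
    (hG : IsJumpSeq n' h G J')
    (hJ : ∀ k, #{i ∈ range k | i + 3 ∈ J} ≤ #{i ∈ range k | i + 3 ∈ J'}) :
    ∀ k, F k ≤ G k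
  | 0 => by rw [hF.2.2.1, hG.2.2.1]
  | k + 1 => by
    refine le_of_add_two_eq_add_add (F := fun k => F (k + 1)) (G := fun k => G (k + 1))
      hF.add_three hG.add_three ?_ ?_ (fun k => ?_) k
    · exact hF.2.2.2.1.trans_le hG.2.2.2.1.ge
    · exact hF.2.2.2.2.1.trans_le hG.2.2.2.2.1.ge
    · simp only [sum_sub_distrib, sum_boole, sum_const, card_range, nsmul_eq_mul, mul_one]
      have := hJ k
      omega

end IsJumpSeq

section fseq

variable {n h : ℕ}

theorem le_fseq_succ {k : ℕ} : h ≤ fseq n h (k + 1) := by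
  induction k using Nat.twoStepInduction with
  | zero => rfl
  | one => rfl
  | more k ih₀ ih₁ =>
    have ih₁ : h ≤ fseq n h (k + 2) := ih₁
    simp only [fseq]
    split_ifs <;> omega

theorem cast_fseq_add_three (hh : 1 ≤ h) (k : ℕ) :
    (fseq n h (k + 3) : ℤ) =
      fseq n h (k + 2) + fseq n h (k + 1) + ((if k + 3 ≤ n + 1 then 1 else 0) - 1) := by
  have hpos : 1 ≤ fseq n h (k + 2) + fseq n h (k + 1) := hh.trans <| le_add_left le_fseq_succ
  simp only [fseq]
  split_ifs <;> push_cast [Nat.cast_sub hpos] <;> ring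

theorem isJumpSeq_fseq (hh : 1 ≤ h) :
    IsJumpSeq n h (fun k => (fseq n h k : ℤ)) (Icc 3 (n + 1)) := by
  refine isJumpSeq_iff.mpr ⟨fun j hj => (mem_Icc.mp hj).1, by simp, rfl, rfl, rfl, fun k => ?_⟩
  simpa only [mem_Icc, le_add_iff_nonneg_left, zero_le, true_and] using cast_fseq_add_three hh k

end fseq

theorem jumpSeq_le_fseq_general (n h : ℕ) (hh : 1 ≤ h) :
    IsJumpSeq n h (fun k => (fseq n h k : ℤ)) (Finset.Icc 3 (n + 1)) ∧
    ∀ (F : ℕ → ℤ) (J : Finset ℕ), IsJumpSeq n h F J →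
      ∀ k, F k ≤ (fseq n h k : ℤ) := by
  refine ⟨isJumpSeq_fseq hh, fun F J hF => hF.le_of_card_filter_le (isJumpSeq_fseq hh) fun k => ?_⟩
  calc #{i ∈ range k | i + 3 ∈ J} ≤ min k #J := card_filter_range_add_mem_le J 3 k
    _ ≤ min k (n - 1) := min_le_min_left k hF.2.1
    _ = #{i ∈ range k | i + 3 ∈ Icc 3 (n + 1)} := by rw [filter_range_add_three_mem_Icc, card_range]

/-- The sequence `f(n,h)` is the `(n,h)`-jump sequence with jump index set
`{3, …, n+1}`, and every `(n,h)`-jump sequence `(F, J)` satisfies `F_k ≤ f(n,h)_k`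
for all `k`; i.e. `f(n,h)` is the pointwise largest `(n,h)`-jump sequence. -/
theorem jumpSeq_le_fseq (n h : ℕ) (hn : 1 ≤ n) (hh : 1 ≤ h) :
    IsJumpSeq n h (fun k => (fseq n h k : ℤ)) (Finset.Icc 3 (n + 1)) ∧
    ∀ (F : ℕ → ℤ) (J : Finset ℕ), IsJumpSeq n h F J →
      ∀ k, F k ≤ (fseq n h k : ℤ) :=
  jumpSeq_le_fseq_general n h hh
end

section
/- Let n ≥ 1 and h ≥ 1 be integers, let (F, J) be an (n,h)-jump sequence, and let i ∈ J be a jump index with i − 1 ≥ 3 and i − 1 ∉ J. Let (F', J') be the (n,h)-jump sequence with jump index set J' = (J \ {i}) ∪ {i − 1}. Then F_k ≤ F'_k for all k ≥ 0; that is, decreasing a jump index by one yields a sequence that is pointwise not smaller than the original. -/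
/-! Let `D = F' - F`. The two jump sets agree below `i - 1`, so `D` vanishes there; moving the
jump from `i` to `i - 1` gives `D (i - 1) = 1` and `D i = 0`, and from then on both sequences
jump at the same indices, so `D` satisfies the Fibonacci recursion and stays nonnegative. -/

theorem nonneg_of_add_le_add_two {D : ℕ → ℤ} {m : ℕ} (h₀ : 0 ≤ D m) (h₁ : 0 ≤ D (m + 1))
    (hrec : ∀ k, m ≤ k → D k + D (k + 1) ≤ D (k + 2)) : ∀ k, m ≤ k → 0 ≤ D k := by
  have pair : ∀ j, 0 ≤ D (m + j) ∧ 0 ≤ D (m + j + 1) := by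
    intro j
    induction j with
    | zero => exact ⟨h₀, h₁⟩
    | succ j ih =>
      have := hrec (m + j) (Nat.le_add_right m j)
      exact ⟨ih.2, by rw [show m + (j + 1) + 1 = m + j + 2 by ring]; linarith [ih.1, ih.2]⟩
  intro k hk
  obtain ⟨j, rfl⟩ := Nat.exists_eq_add_of_le hk
  exact (pair j).1

namespace IsJumpSeq

variable {n h : ℕ} {F G : ℕ → ℤ} {J K : Finset ℕ}

theorem add_two (hF : IsJumpSeq n h F J) {k : ℕ} (hk : 1 ≤ k) :
    F (k + 2) = F (k + 1) + F k - if k + 2 ∈ J then 0 else 1 := by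
  obtain ⟨-, -, -, -, -, hjump, hnojump⟩ := hF
  split_ifs with hkJ
  · simpa using hjump (k + 2) (by omega) hkJ
  · simpa using hnojump (k + 2) (by omega) hkJ

theorem eq_of_forall_lt_mem_iff (hF : IsJumpSeq n h F J) (hG : IsJumpSeq n h G K) {N : ℕ}
    (hJK : ∀ k < N, (k ∈ J ↔ k ∈ K)) : ∀ k < N, F k = G k := by
  intro k
  induction k using Nat.strong_induction_on with
  | _ k ih =>
    intro hk
    match k with
    | 0 => rw [hF.2.2.1, hG.2.2.1]
    | 1 => rw [hF.2.2.2.1, hG.2.2.2.1]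
    | 2 => rw [hF.2.2.2.2.1, hG.2.2.2.2.1]
    | k + 3 =>
      rw [hF.add_two (k := k + 1) (by omega), hG.add_two (k := k + 1) (by omega),
        ih (k + 2) (by omega) (by omega), ih (k + 1) (by omega) (by omega),
        if_congr (hJK (k + 3) hk) rfl rfl]

end IsJumpSeq

section MoveJump

variable {n h : ℕ} {F F' : ℕ → ℤ} {J : Finset ℕ} {i : ℕ}

theorem mem_insert_pred_erase_iff {k : ℕ} (hk : k ≠ i - 1) (hki : k ≠ i) :
    k ∈ insert (i - 1) (J.erase i) ↔ k ∈ J := by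
  simp [hk, hki]

theorem IsJumpSeq.eq_of_lt_pred (hF : IsJumpSeq n h F J)
    (hF' : IsJumpSeq n h F' (insert (i - 1) (J.erase i))) : ∀ k < i - 1, F k = F' k :=
  hF.eq_of_forall_lt_mem_iff hF' fun _ hk =>
    (mem_insert_pred_erase_iff (by omega) (by omega)).symm

theorem IsJumpSeq.pred_add_one_eq (hF : IsJumpSeq n h F J) (hi3 : 3 ≤ i - 1) (hi1 : i - 1 ∉ J)
    (hF' : IsJumpSeq n h F' (insert (i - 1) (J.erase i))) : F (i - 1) + 1 = F' (i - 1) := by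
  have e := hF.add_two (k := i - 3) (by omega)
  have e' := hF'.add_two (k := i - 3) (by omega)
  rw [show i - 3 + 2 = i - 1 by omega, show i - 3 + 1 = i - 2 by omega] at e e'
  simp only [hi1, Finset.mem_insert_self, if_true, if_false] at e e'
  linarith [hF.eq_of_lt_pred hF' (i - 2) (by omega), hF.eq_of_lt_pred hF' (i - 3) (by omega)]

theorem IsJumpSeq.eq_of_mem (hF : IsJumpSeq n h F J) (hiJ : i ∈ J) (hi3 : 3 ≤ i - 1)
    (hi1 : i - 1 ∉ J) (hF' : IsJumpSeq n h F' (insert (i - 1) (J.erase i))) : F i = F' i := by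
  have e := hF.add_two (k := i - 2) (by omega)
  have e' := hF'.add_two (k := i - 2) (by omega)
  rw [show i - 2 + 2 = i by omega, show i - 2 + 1 = i - 1 by omega] at e e'
  have hiJ' : i ∉ insert (i - 1) (J.erase i) := by simpa using show i ≠ i - 1 by omega
  simp only [hiJ, hiJ', if_true, if_false] at e e'
  linarith [hF.eq_of_lt_pred hF' (i - 2) (by omega), hF.pred_add_one_eq hi3 hi1 hF']

end MoveJump

theorem jumpSeq_le_of_decrease_jump_index_general
    (n h : ℕ)
    (F F' : ℕ → ℤ) (J : Finset ℕ) (hF : IsJumpSeq n h F J)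
    (i : ℕ) (hiJ : i ∈ J) (hi3 : 3 ≤ i - 1) (hi1 : i - 1 ∉ J)
    (hF' : IsJumpSeq n h F' (insert (i - 1) (J.erase i))) :
    ∀ k, F k ≤ F' k := by
  have above := nonneg_of_add_le_add_two (D := F' - F) (m := i - 1)
    (by simp only [Pi.sub_apply]; linarith [hF.pred_add_one_eq hi3 hi1 hF'])
    (by rw [show i - 1 + 1 = i by omega]; simp [hF.eq_of_mem hiJ hi3 hi1 hF'])
    fun k hk => by
      have e := hF.add_two (k := k) (by omega)
      have e' := hF'.add_two (k := k) (by omega)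
      rw [if_congr (mem_insert_pred_erase_iff (by omega) (by omega)) rfl rfl] at e'
      simp only [Pi.sub_apply]
      linarith
  intro k
  rcases lt_or_ge k (i - 1) with hk | hk
  · exact (hF.eq_of_lt_pred hF' k hk).le
  · simpa using above k hk

/-- Decreasing a jump index by one yields a pointwise not smaller `(n,h)`-jump sequence:
if `(F, J)` is an `(n,h)`-jump sequence, `i ∈ J`, `i - 1 ≥ 3`, `i - 1 ∉ J`, and
`(F', (J \ {i}) ∪ {i-1})` is an `(n,h)`-jump sequence, then `F_k ≤ F'_k` for all `k`. -/
theorem jumpSeq_le_of_decrease_jump_index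
    (n h : ℕ) (hn : 1 ≤ n) (hh : 1 ≤ h)
    (F F' : ℕ → ℤ) (J : Finset ℕ) (hF : IsJumpSeq n h F J)
    (i : ℕ) (hiJ : i ∈ J) (hi3 : 3 ≤ i - 1) (hi1 : i - 1 ∉ J)
    (hF' : IsJumpSeq n h F' (insert (i - 1) (J.erase i))) :
    ∀ k, F k ≤ F' k :=
  jumpSeq_le_of_decrease_jump_index_general n h F F' J hF i hiJ hi3 hi1 hF'
end

section
/- Let h ≥ 1 be an integer, and define c_0 = 1 and c_i = c_{i−1} + 1 + h·Fib_{c_{i−1}+1} − (h − i) for 1 ≤ i ≤ h. Then the maximal length of an antichain sequence in ℤ_{≥0}^3 whose degree growth is bounded by the function i ↦ h·Fib_i is equal to c_h. -/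
/-- The sequence `c_i`: `c_0 = 1`, `c_i = c_{i-1} + 1 + h·Fib_{c_{i-1}+1} − (h − i)`. -/
def cseq (h : ℕ) : ℕ → ℕ
  | 0 => 1
  | (i+1) => cseq h i + 1 + h * Nat.fib (cseq h i + 1) - (h - (i + 1))

/-!
For the lower bound the sequence is built in blocks: block `T ≤ h` lies in the plane `z = h - T`
and runs through the whole antidiagonal `x + y = c_T - c_{T-1} - 1` (with `c_{-1} = 0`), whose
degree is exactly the bound `h Fib` at the start of the block. Block lengths increase while heights
decrease, so points of different blocks are incomparable.

For the upper bound let `m_t` be the componentwise minimum of `s_0, …, s_t` and `K_t ≤ h` its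
degree. Later points that do not lower `m_t` lie in the region of points `≥ m_t` incomparable with
`s_0, …, s_t`, and every antichain there has at most `b_t` elements. A step that keeps `K` uses up
one unit of `b`; a step from `K_t` down to `K_{t+1}` adds at most
`(K_t - K_{t+1}) (h Fib_{t+2} - K_{t+1})`, because a point of an antichain in `ℕ³` is determined
by two of its coordinates. In the resulting numerical game it is best to descend one level at a
time, as late as the budget allows, and this greedy strategy ends exactly at `c_h`.
-/

open Finset Nat

section Width

variable {α : Type*} [Preorder α] {S T : Set α} {m n : ℕ}

def WidthLE (S : Set α) (n : ℕ) : Prop :=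
  ∀ F : Finset α, ↑F ⊆ S → IsAntichain (· ≤ ·) (F : Set α) → #F ≤ n

lemma widthLE_empty : WidthLE (∅ : Set α) 0 := fun F hF _ => by
  simp [Finset.eq_empty_of_forall_notMem fun x hx => hF hx]

lemma WidthLE.mono (hS : WidthLE S n) (hTS : T ⊆ S) (hnm : n ≤ m) : WidthLE T m :=
  fun F hF hA => (hS F (hF.trans hTS) hA).trans hnm

lemma WidthLE.pos_of_mem {u : α} (hS : WidthLE S n) (hu : u ∈ S) : 0 < n :=
  lt_of_lt_of_le (by simp) (hS {u} (by simpa using hu) (by simp))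

lemma WidthLE.of_insert {u : α} (hS : WidthLE S (n + 1)) (hu : u ∈ S)
    (hTS : T ⊆ {x ∈ S | ¬ x ≤ u ∧ ¬ u ≤ x}) : WidthLE T n := by
  classical
  intro F hF hA
  have huF : u ∉ F := fun h => (hTS (hF h)).2.1 le_rfl
  have hins : IsAntichain (· ≤ ·) (insert u (F : Set α)) :=
    hA.insert (fun _ hb _ => (hTS (hF hb)).2.1) (fun _ hb _ => (hTS (hF hb)).2.2)
  have := hS (insert u F)
    (by rw [coe_insert]; exact Set.insert_subset hu fun x hx => (hTS (hF hx)).1)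
    (by simpa using hins)
  rw [card_insert_of_notMem huF] at this
  omega

lemma WidthLE.union (hS : WidthLE S m) (hT : WidthLE T n) : WidthLE (S ∪ T) (m + n) := by
  classical
  intro F hF hA
  rw [← card_filter_add_card_filter_not (· ∈ S)]
  gcongr
  · exact hS _ (fun x hx => (mem_filter.1 hx).2) (hA.subset (coe_subset.2 (filter_subset _ _)))
  · refine hT _ (fun x hx => ?_) (hA.subset (coe_subset.2 (filter_subset _ _)))
    obtain ⟨hxF, hxS⟩ := mem_filter.1 hx
    exact (hF hxF).resolve_left hxS

end Width

section FreeRegion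

variable {α : Type*} [SemilatticeInf α] (s : ℕ → α)

def prefixInf : ℕ → α
  | 0 => s 0
  | t + 1 => prefixInf t ⊓ s (t + 1)

def freeRegion (t : ℕ) : Set α :=
  {x | prefixInf s t ≤ x ∧ ∀ i ≤ t, ¬ x ≤ s i ∧ ¬ s i ≤ x}

variable {s}

lemma prefixInf_le {i t : ℕ} (hi : i ≤ t) : prefixInf s t ≤ s i := by
  induction t with
  | zero =>
    obtain rfl := Nat.le_zero.1 hi
    exact le_rfl
  | succ t ih =>
    rcases Nat.le_succ_iff.1 hi with hi | rfl
    · exact inf_le_left.trans (ih hi)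
    · exact inf_le_right

lemma freeRegion_zero : freeRegion s 0 = ∅ :=
  Set.eq_empty_of_forall_notMem fun _ hx => (hx.2 0 le_rfl).2 hx.1

lemma freeRegion_succ_subset (t : ℕ) :
    freeRegion s (t + 1) ⊆
      freeRegion s t ∪ {x | prefixInf s (t + 1) ≤ x ∧ ¬ prefixInf s t ≤ x ∧ ¬ s (t + 1) ≤ x} := by
  intro x hx
  by_cases hm : prefixInf s t ≤ x
  · exact Or.inl ⟨hm, fun i hi => hx.2 i (by omega)⟩
  · exact Or.inr ⟨hx.1, hm, (hx.2 (t + 1) le_rfl).2⟩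

lemma widthLE_freeRegion_succ_of_le {t b : ℕ} (hle : prefixInf s t ≤ s (t + 1))
    (hinc : ∀ i ≤ t, ¬ s (t + 1) ≤ s i ∧ ¬ s i ≤ s (t + 1)) (hb : WidthLE (freeRegion s t) b) :
    ∃ b', b = b' + 1 ∧ WidthLE (freeRegion s (t + 1)) b' := by
  have hmem : s (t + 1) ∈ freeRegion s t := ⟨hle, hinc⟩
  obtain ⟨b', rfl⟩ := Nat.exists_eq_add_one.2 (hb.pos_of_mem hmem)
  refine ⟨b', rfl, hb.of_insert hmem fun x hx =>
    ⟨⟨?_, fun i hi => hx.2 i (by omega)⟩, hx.2 _ le_rfl⟩⟩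
  simpa [prefixInf, inf_eq_left.2 hle] using hx.1

end FreeRegion

section Cube

lemma le_or_le_of_eq_of_eq {x y : Fin 3 → ℕ} {i j : Fin 3} (hij : i ≠ j) (hi : x i = y i)
    (hj : x j = y j) : x ≤ y ∨ y ≤ x := by
  by_contra! h
  obtain ⟨⟨c, hc⟩, ⟨d, hd⟩⟩ : (∃ c, y c < x c) ∧ ∃ d, x d < y d := by
    simpa [Pi.le_def] using h
  have : c ≠ i ∧ c ≠ j ∧ d ≠ i ∧ d ≠ j ∧ c ≠ d := by
    refine ⟨?_, ?_, ?_, ?_, ?_⟩ <;> rintro rfl <;> omega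
  omega

def coordSlices (a b : Fin 3 → ℕ) : Finset ((_ : Fin 3) × ℕ) :=
  univ.sigma fun j => Ico (a j) (b j)

lemma card_coordSlices {a b : Fin 3 → ℕ} (hab : a ≤ b) :
    #(coordSlices a b) = ∑ j, b j - ∑ j, a j := by
  rw [coordSlices, card_sigma]
  simp only [Nat.card_Ico]
  exact sum_tsub_distrib _ fun j _ => hab j

lemma IsAntichain.card_le_of_forall_exists_key {F : Finset (Fin 3 → ℕ)}
    (hF : IsAntichain (· ≤ ·) (F : Set (Fin 3 → ℕ)))
    (K : Finset (((_ : Fin 3) × ℕ) × ((_ : Fin 3) × ℕ)))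
    (hK : ∀ x ∈ F, ∃ p ∈ K, p.1.1 ≠ p.2.1 ∧ x p.1.1 = p.1.2 ∧ x p.2.1 = p.2.2) : #F ≤ #K := by
  choose! key hkey hne hfst hsnd using hK
  refine card_le_card_of_injOn key hkey fun x hx y hy hxy => by_contra fun hxy' => ?_
  have h1 : x (key x).1.1 = y (key x).1.1 := by rw [hfst x hx, hxy, hfst y hy]
  have h2 : x (key x).2.1 = y (key x).2.1 := by rw [hsnd x hx, hxy, hsnd y hy]
  rcases le_or_le_of_eq_of_eq (hne x hx) h1 h2 with hle | hle
  · exact hF hx hy hxy' hle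
  · exact hF hy hx (Ne.symm hxy') hle

lemma widthLE_inf_le_not_le (m u : Fin 3 → ℕ) :
    WidthLE {x | m ⊓ u ≤ x ∧ ¬ m ≤ x ∧ ¬ u ≤ x}
      ((∑ j, m j - ∑ j, (m ⊓ u) j) * (∑ j, u j - ∑ j, (m ⊓ u) j)) := by
  intro F hF hA
  rw [← card_coordSlices inf_le_left, ← card_coordSlices inf_le_right, ← card_product]
  refine hA.card_le_of_forall_exists_key _ fun x hx => ?_
  obtain ⟨hinf, hm, hu⟩ := hF hx
  obtain ⟨j, hj⟩ : ∃ j, x j < m j := by simpa [Pi.le_def] using hm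
  obtain ⟨c, hc⟩ : ∃ c, x c < u c := by simpa [Pi.le_def] using hu
  have hinfj := hinf j
  have hinfc := hinf c
  simp only [Pi.inf_apply] at hinfj hinfc
  refine ⟨(⟨j, x j⟩, ⟨c, x c⟩), ?_, ?_, rfl, rfl⟩
  · simp only [coordSlices, mem_product, mem_sigma, mem_univ, mem_Ico, Pi.inf_apply, true_and]
    exact ⟨⟨hinfj, hj⟩, hinfc, hc⟩
  · rintro (rfl : j = c)
    omega

end Cube

lemma le_mul_fib (h : ℕ) {n : ℕ} (hn : 1 ≤ n) : h ≤ h * fib n :=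
  Nat.le_mul_of_pos_right h (fib_pos.2 hn)

lemma mul_fib_add_le (h : ℕ) {r : ℕ} (hr : 1 ≤ r) : h * fib (r + 1) + h ≤ h * fib (r + 2) := by
  rw [fib_add_two, mul_add, add_comm]
  exact Nat.add_le_add_right (le_mul_fib h hr) _

section Greedy

variable (h : ℕ)

/-- Final position of the greedy strategy that, after position `r` with `k` levels left to descend,
drops one level and then spends the whole budget `h Fib_{r+1} - (k - 1)` inside the new level. -/
def greedyEnd : ℕ → ℕ → ℕ
  | 0, r => r
  | k + 1, r => greedyEnd k (r + 1 + (h * fib (r + 1) - k))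

variable {h}

lemma greedyEnd_mono_right (k : ℕ) : Monotone (greedyEnd h k) := by
  induction k with
  | zero => exact monotone_id
  | succ k ih =>
    intro r r' hr
    exact ih (by have := Nat.mul_le_mul_left h (fib_mono (Nat.add_le_add_right hr 1)); omega)

lemma le_greedyEnd (k r : ℕ) : r ≤ greedyEnd h k r := by
  induction k generalizing r with
  | zero => exact le_rfl
  | succ k ih => exact (by omega : r ≤ _).trans (ih _)

lemma greedyEnd_mono_left (r : ℕ) : Monotone (greedyEnd h · r) :=
  monotone_nat_of_le_succ fun k => greedyEnd_mono_right k (by omega)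

/-- Descending one level at a time is at least as good, since each step raises the budget
`h Fib` by at least `h`. -/
lemma greedyEnd_descend_le {k d r : ℕ} (hkh : k + d + 1 ≤ h) (hr : 1 ≤ r) :
    greedyEnd h k (r + 1 + (d + 1) * (h * fib (r + 1) - k)) ≤ greedyEnd h (k + d + 1) r := by
  induction d generalizing r with
  | zero => simp [greedyEnd]
  | succ d ih =>
    set A := h * fib (r + 1)
    set r₁ := r + 1 + (A - (k + d + 1))
    have hAh : h ≤ A := le_mul_fib h (by omega)
    have hA₁ : A + h ≤ h * fib (r₁ + 1) :=
      (mul_fib_add_le h hr).trans (Nat.mul_le_mul_left h (fib_mono (by omega)))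
    have hpos : r + 1 + (d + 1 + 1) * (A - k) ≤ r₁ + 1 + (d + 1) * (h * fib (r₁ + 1) - k) := by
      have e₁ : (d + 1) * (A - k + h) ≤ (d + 1) * (h * fib (r₁ + 1) - k) :=
        Nat.mul_le_mul_left _ (by omega)
      have e₂ : d + 1 ≤ (d + 1) * h := Nat.le_mul_of_pos_right _ (by omega)
      rw [mul_add] at e₁
      rw [add_mul _ 1, one_mul]
      omega
    exact (greedyEnd_mono_right k hpos).trans (ih (by omega) (by omega))

lemma greedyEnd_le_of_lt {K K' r n : ℕ} (hK : K' < K) (hKh : K ≤ h) (hr : 1 ≤ r)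
    (hn : n ≤ h * fib (r + 1)) :
    greedyEnd h K' (r + 1 + (K - K') * (n - K')) ≤ greedyEnd h K r := by
  have hdesc := greedyEnd_descend_le (h := h) (k := K') (d := K - K' - 1) (by omega) hr
  rw [show K' + (K - K' - 1) + 1 = K by omega, show K - K' - 1 + 1 = K - K' by omega] at hdesc
  exact (greedyEnd_mono_right K' (by gcongr)).trans hdesc

lemma cseq_succ_add (t : ℕ) :
    cseq h (t + 1) + (h - (t + 1)) = cseq h t + 1 + h * fib (cseq h t + 1) := by
  have := le_mul_fib h (n := cseq h t + 1) (by omega)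
  simp only [cseq]
  omega

lemma greedyEnd_cseq {i j : ℕ} (hij : i + j = h) : greedyEnd h j (cseq h i) = cseq h h := by
  induction j generalizing i with
  | zero => simp [greedyEnd, ← hij]
  | succ j ih =>
    have hstep := cseq_succ_add (h := h) i
    have := le_mul_fib h (n := cseq h i + 1) (by omega)
    rw [greedyEnd, ← ih (i := i + 1) (by omega)]
    congr 1
    omega

lemma cseq_eq_greedyEnd : cseq h h = greedyEnd h h 1 :=
  (greedyEnd_cseq (zero_add h)).symm

end Greedy

section UpperBound

variable {h L : ℕ} {s : ℕ → Fin 3 → ℕ}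

lemma sum_prefixInf_le (t : ℕ) : ∑ k, prefixInf s t k ≤ ∑ k, s 0 k :=
  sum_le_sum fun k _ => prefixInf_le (s := s) (Nat.zero_le t) k

lemma widthLE_freeRegion_succ (t b : ℕ) (hb : WidthLE (freeRegion s t) b) :
    WidthLE (freeRegion s (t + 1)) (b + (∑ k, prefixInf s t k - ∑ k, prefixInf s (t + 1) k) *
      (∑ k, s (t + 1) k - ∑ k, prefixInf s (t + 1) k)) :=
  (hb.union (widthLE_inf_le_not_le _ _)).mono (freeRegion_succ_subset t) le_rfl

lemma exists_widthLE_freeRegion (hA : ∀ i < L, ∀ j < L, i ≠ j → ¬ s i ≤ s j)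
    (hdeg : ∀ i < L, ∑ k, s i k ≤ h * fib (i + 1)) :
    ∀ t < L, ∃ b, WidthLE (freeRegion s t) b ∧
      greedyEnd h (∑ k, prefixInf s t k) (t + 1 + b) ≤ cseq h h := by
  intro t htL
  induction t with
  | zero =>
    refine ⟨0, freeRegion_zero (s := s) ▸ widthLE_empty, ?_⟩
    rw [cseq_eq_greedyEnd]
    exact greedyEnd_mono_left 1 ((sum_prefixInf_le 0).trans (by simpa using hdeg 0 htL))
  | succ t ih =>
    obtain ⟨b, hb, hend⟩ := ih (by omega)
    by_cases hle : prefixInf s t ≤ s (t + 1)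
    · have hinc : ∀ i ≤ t, ¬ s (t + 1) ≤ s i ∧ ¬ s i ≤ s (t + 1) := fun i hi =>
        ⟨hA _ htL _ (by omega) (by omega), hA _ (by omega) _ htL (by omega)⟩
      obtain ⟨b', rfl, hb'⟩ := widthLE_freeRegion_succ_of_le hle hinc hb
      refine ⟨b', hb', ?_⟩
      have hinf : prefixInf s (t + 1) = prefixInf s t := inf_eq_left.2 hle
      rw [hinf]
      convert hend using 2
      omega
    · have hlt : ∑ k, prefixInf s (t + 1) k < ∑ k, prefixInf s t k := by
        obtain ⟨-, j, hj⟩ := Pi.lt_def.1 (inf_lt_left.2 hle)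
        exact sum_lt_sum (fun k _ => inf_le_left (a := prefixInf s t k)) ⟨j, mem_univ _, hj⟩
      have hKh : ∑ k, prefixInf s t k ≤ h :=
        (sum_prefixInf_le t).trans (by simpa using hdeg 0 (by omega))
      have hdeg' : ∑ k, s (t + 1) k ≤ h * fib (t + 1 + b + 1) :=
        (hdeg _ htL).trans (Nat.mul_le_mul_left h (fib_mono (by omega)))
      refine ⟨_, widthLE_freeRegion_succ t b hb,
        le_trans (le_of_eq ?_) ((greedyEnd_le_of_lt hlt hKh (by omega) hdeg').trans hend)⟩
      congr 1
      ring

theorem length_le_cseq (hA : ∀ i < L, ∀ j < L, i ≠ j → ¬ s i ≤ s j)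
    (hdeg : ∀ i < L, ∑ k, s i k ≤ h * fib (i + 1)) : L ≤ cseq h h := by
  obtain _ | L := L
  · exact Nat.zero_le _
  obtain ⟨b, -, hend⟩ := exists_widthLE_freeRegion hA hdeg L (by omega)
  exact (by omega : L + 1 ≤ L + 1 + b).trans ((le_greedyEnd _ _).trans hend)

end UpperBound

section Construction

variable {h : ℕ}

/-- `blockStart h T` is `c_{T-1}`, with `c_{-1} = 0`. -/
def blockStart (h : ℕ) : ℕ → ℕ
  | 0 => 0
  | t + 1 => cseq h t

lemma cseq_add_eq_blockStart (T : ℕ) :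
    cseq h T + (h - T) = blockStart h T + 1 + h * fib (blockStart h T + 1) := by
  cases T with
  | zero => simp [cseq, blockStart, add_comm]
  | succ t => exact cseq_succ_add t

lemma blockStart_lt_cseq (T : ℕ) : blockStart h T < cseq h T := by
  have := cseq_add_eq_blockStart (h := h) T
  have := le_mul_fib h (n := blockStart h T + 1) (by omega)
  omega

lemma cseq_strictMono : StrictMono (cseq h) :=
  strictMono_nat_of_lt_succ fun t => blockStart_lt_cseq (t + 1)

lemma blockStart_mono : Monotone (blockStart h) :=
  monotone_nat_of_le_succ fun t => (blockStart_lt_cseq t).le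

lemma cseq_sub_blockStart_lt {T T' : ℕ} (hTT' : T < T') (hT' : T' ≤ h) :
    cseq h T - blockStart h T < cseq h T' - blockStart h T' := by
  have h₁ := cseq_add_eq_blockStart (h := h) T
  have h₂ := cseq_add_eq_blockStart (h := h) T'
  have := Nat.mul_le_mul_left h
    (fib_mono (Nat.add_le_add_right (blockStart_mono (h := h) hTT'.le) 1))
  have := blockStart_lt_cseq (h := h) T
  have := blockStart_lt_cseq (h := h) T'
  omega

lemma exists_lt_cseq (h i : ℕ) : ∃ T, i < cseq h T :=
  ⟨i + 1, cseq_strictMono.id_le (i + 1)⟩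

def block (h i : ℕ) : ℕ := Nat.find (exists_lt_cseq h i)

lemma lt_cseq_block (i : ℕ) : i < cseq h (block h i) := Nat.find_spec (exists_lt_cseq h i)

lemma block_le {i T : ℕ} (hi : i < cseq h T) : block h i ≤ T := Nat.find_min' _ hi

lemma blockStart_block_le (i : ℕ) : blockStart h (block h i) ≤ i := by
  cases hT : block h i with
  | zero => exact Nat.zero_le i
  | succ t => exact not_lt.1 (Nat.find_min (exists_lt_cseq h i) (show t < block h i by omega))

def stair (h i : ℕ) : Fin 3 → ℕ :=
  ![i - blockStart h (block h i), cseq h (block h i) - 1 - i, h - block h i]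

lemma stair_two (i : ℕ) : stair h i 2 = h - block h i := rfl

lemma stair_zero_add_one (i : ℕ) :
    stair h i 0 + stair h i 1 = cseq h (block h i) - blockStart h (block h i) - 1 := by
  have := lt_cseq_block (h := h) i
  have := blockStart_block_le (h := h) i
  simp only [stair, Matrix.cons_val_zero, Matrix.cons_val_one]
  omega

lemma sum_stair_le (i : ℕ) : ∑ k, stair h i k ≤ h * fib (i + 1) := by
  have h₁ := stair_zero_add_one (h := h) i
  have h₂ := cseq_add_eq_blockStart (h := h) (block h i)
  have h₃ := Nat.mul_le_mul_left h
    (fib_mono (Nat.add_le_add_right (blockStart_block_le (h := h) i) 1))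
  have := blockStart_lt_cseq (h := h) (block h i)
  rw [Fin.sum_univ_three, stair_two]
  omega

lemma not_le_of_lt_or_lt_or_eq {x y : Fin 3 → ℕ}
    (hxy : y 2 < x 2 ∨ y 0 + y 1 < x 0 + x 1 ∨ (y 0 + y 1 = x 0 + x 1 ∧ x 0 ≠ y 0)) : ¬ x ≤ y :=
  fun hle => by
    have : x 0 ≤ y 0 ∧ x 1 ≤ y 1 ∧ x 2 ≤ y 2 := ⟨hle 0, hle 1, hle 2⟩
    omega

lemma stair_not_le {i j : ℕ} (hi : i < cseq h h) (hj : j < cseq h h) (hij : i ≠ j) :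
    ¬ stair h i ≤ stair h j := by
  apply not_le_of_lt_or_lt_or_eq
  rw [stair_zero_add_one, stair_zero_add_one]
  have hTi := block_le hi
  have hTj := block_le hj
  rcases lt_trichotomy (block h i) (block h j) with hT | hT | hT
  · left
    rw [stair_two, stair_two]
    omega
  · have hi' := blockStart_block_le (h := h) i
    have hj' := blockStart_block_le (h := h) j
    rw [hT] at hi' ⊢
    refine Or.inr (Or.inr ⟨rfl, ?_⟩)
    simp only [stair, Matrix.cons_val_zero, hT]
    omega
  · have := cseq_sub_blockStart_lt hT hTi
    have := blockStart_lt_cseq (h := h) (block h j)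
    exact Or.inr (Or.inl (by omega))

end Construction

theorem maximal_antichain_length_dim3_general (h : ℕ) :
    IsGreatest {L : ℕ | ∃ s : Fin L → (Fin 3 → ℕ),
      (∀ i j : Fin L, i ≠ j → ¬ s i ≤ s j) ∧
      (∀ i : Fin L, (∑ k, s i k) ≤ h * Nat.fib (i.val + 1))} (cseq h h) := by
  refine ⟨⟨fun i => stair h i, fun i j hij => stair_not_le i.isLt j.isLt (Fin.val_ne_of_ne hij),
    fun i => sum_stair_le i⟩, ?_⟩
  rintro L ⟨s, hA, hdeg⟩
  let s' : ℕ → Fin 3 → ℕ := fun i => if hi : i < L then s ⟨i, hi⟩ else 0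
  refine length_le_cseq (s := s') (fun i hi j hj hij => ?_) (fun i hi => ?_)
  · simpa [s', hi, hj] using hA ⟨i, hi⟩ ⟨j, hj⟩ (by simpa [Fin.ext_iff] using hij)
  · simpa [s', hi] using hdeg ⟨i, hi⟩

/-- The maximal length of an antichain sequence in `ℤ_{≥0}^3` (componentwise order)
whose degree growth is bounded by `i ↦ h·Fib_i` is equal to `c_h`. -/
theorem maximal_antichain_length_dim3 (h : ℕ) (hh : 1 ≤ h) :
    IsGreatest {L : ℕ | ∃ s : Fin L → (Fin 3 → ℕ),
      (∀ i j : Fin L, i ≠ j → ¬ s i ≤ s j) ∧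
      (∀ i : Fin L, (∑ k, s i k) ≤ h * Nat.fib (i.val + 1))} (cseq h h) :=
  maximal_antichain_length_dim3_general h
end

section
/- Every antichain sequence s_1, …, s_L in ℤ_{≥0}^3 with deg(s_i) ≤ Fib_i for all 1 ≤ i ≤ L satisfies L ≤ 3, and there exists such an antichain sequence of length exactly 3 (for instance (1,0,0), (0,1,0), (0,0,2)). That is, the maximal length of an antichain sequence in ℤ_{≥0}^3 with degree growth bounded by the Fibonacci sequence is 3. -/
/-!
The first two terms have degree at most one and are incomparable, so they are two distinct
unit vectors `e i`, `e j`. Every later term lies above neither, hence vanishes at `i` and `j`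
and is a multiple of the third unit vector; two such multiples are comparable, so there is
room for at most one more term. The sequence `e 0, e 1, 2 • e 2` attains length three.
-/

theorem Pi.single_le_iff {ι α : Type*} [DecidableEq ι] [AddZeroClass α] [PartialOrder α]
    [CanonicallyOrderedAdd α] {i : ι} {a : α} {x : ι → α} :
    Pi.single i a ≤ x ↔ a ≤ x i := by
  refine ⟨fun h => by simpa using h i, fun h j => ?_⟩
  rcases eq_or_ne j i with rfl | hj
  · simpa using h
  · simp [hj]

theorem exists_eq_single_of_sum_le_one {ι : Type*} [Fintype ι] [DecidableEq ι] {x : ι → ℕ}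
    (h : ∑ i, x i ≤ 1) (hx : x ≠ 0) : ∃ i, x = Pi.single i 1 := by
  obtain ⟨i, hi⟩ := Function.ne_iff.mp hx
  have hunique := Finset.sum_le_one_iff.mp h
  refine ⟨i, funext fun j => ?_⟩
  rcases eq_or_ne j i with rfl | hj
  · simpa using (hunique j j (by simp) (by simp) hi hi).2
  · rw [Pi.single_eq_of_ne hj]
    by_contra hxj
    exact hj (hunique j i (by simp) (by simp) hxj hi).1

theorem le_total_of_eq_zero_of_ne {ι α : Type*} [LinearOrder α] [Zero α] {x y : ι → α} (k : ι)
    (hx : ∀ l ≠ k, x l = 0) (hy : ∀ l ≠ k, y l = 0) : x ≤ y ∨ y ≤ x := by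
  have key : ∀ {x y : ι → α}, (∀ l ≠ k, x l = 0) → (∀ l ≠ k, y l = 0) → x k ≤ y k → x ≤ y :=
    fun hx hy hk l => by
      rcases eq_or_ne l k with rfl | hl
      · exact hk
      · rw [hx l hl, hy l hl]
  exact (le_total (x k) (y k)).imp (key hx hy) (key hy hx)

theorem Fin.exists_forall_ne_eq_or_eq_of_ne {i j : Fin 3} (hij : i ≠ j) :
    ∃ k, ∀ l ≠ k, l = i ∨ l = j := by
  revert i j
  decide

theorem le_total_of_sum_le_one_of_not_le {a b c d : Fin 3 → ℕ}
    (ha : ∑ k, a k ≤ 1) (hb : ∑ k, b k ≤ 1) (hab : ¬ a ≤ b) (hba : ¬ b ≤ a)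
    (hac : ¬ a ≤ c) (had : ¬ a ≤ d) (hbc : ¬ b ≤ c) (hbd : ¬ b ≤ d) : c ≤ d ∨ d ≤ c := by
  obtain ⟨i, rfl⟩ := exists_eq_single_of_sum_le_one ha fun h => hab (h ▸ zero_le)
  obtain ⟨j, rfl⟩ := exists_eq_single_of_sum_le_one hb fun h => hba (h ▸ zero_le)
  have hij : i ≠ j := by
    rintro rfl
    exact hab le_rfl
  have vanish : ∀ {x : Fin 3 → ℕ}, ¬ Pi.single i 1 ≤ x → ¬ Pi.single j 1 ≤ x →
      ∀ l, l = i ∨ l = j → x l = 0 := by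
    rintro x hix hjx l (rfl | rfl)
    · simpa [Pi.single_le_iff] using hix
    · simpa [Pi.single_le_iff] using hjx
  obtain ⟨k, hk⟩ := Fin.exists_forall_ne_eq_or_eq_of_ne hij
  exact le_total_of_eq_zero_of_ne k (fun l hl => vanish hac hbc l (hk l hl))
    (fun l hl => vanish had hbd l (hk l hl))

/-- The maximal length of an antichain sequence in `ℤ_{≥0}^3` (componentwise order)
with `deg(s_i) ≤ Fib_i` is equal to `3`. -/
theorem maximal_antichain_length_dim3_h1 :
    IsGreatest {L : ℕ | ∃ s : Fin L → (Fin 3 → ℕ),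
      (∀ i j : Fin L, i ≠ j → ¬ s i ≤ s j) ∧
      (∀ i : Fin L, (∑ k, s i k) ≤ Nat.fib (i.val + 1))} 3 := by
  refine ⟨⟨![![1, 0, 0], ![0, 1, 0], ![0, 0, 2]], ?_, by decide⟩, ?_⟩
  · simp only [Pi.le_def]
    decide
  rintro L ⟨s, hs, hdeg⟩
  by_contra! hL
  let t : Fin 4 → Fin 3 → ℕ := fun n => s (Fin.castLE hL n)
  have ht : ∀ m n, m ≠ n → ¬ t m ≤ t n := fun m n h => hs _ _ ((Fin.castLE_injective hL).ne h)
  rcases le_total_of_sum_le_one_of_not_le (a := t 0) (b := t 1) (hdeg _) (hdeg _)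
      (ht 0 1 (by decide)) (ht 1 0 (by decide)) (ht 0 2 (by decide)) (ht 0 3 (by decide))
      (ht 1 2 (by decide)) (ht 1 3 (by decide)) with h | h
  exacts [ht 2 3 (by decide) h, ht 3 2 (by decide) h]
end

section
/- The maximal length of an antichain sequence s_1, …, s_L in ℤ_{≥0}^5 with deg(s_i) ≤ Fib_i for all 1 ≤ i ≤ L is equal to 20. -/
/-!
The first two terms have degree at most one, so they are distinct unit vectors `e a`, `e b`, and
every later term vanishes at `a` and `b`: deleting these two coordinates leaves an antichain of
nineteen terms in `ℕ³`. Inside an antichain, a slice on which one coordinate is constant is an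
antichain in `ℕ²`; both coordinates are injective on it, so it has at most `deg u + 1` elements
for any member `u`. Hence a slice with more than fourteen terms only contains terms `s_i` with
`Fib_i ≥ 14`, and there are just fourteen of those. The third term `u` has degree at most two and
no later term lies above it. According as `u` is `e c`, `2 e c` or `e c + e d`, this splits the
remaining eighteen terms into at most two slices, whose sizes are then bounded through the
degree of the fourth term.

The bound is attained by `e 0, e 1, 2 e 2, e 2 + 2 e 3, e 2 + e 3 + e 4, e 2 + 2 e 4` followed by
the fourteen points of degree `13` in the last two coordinates.
-/

open Finset
open Nat (fib)

variable {ι : Type*}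

lemma exists_apply_lt_of_not_le {α : Type*} [LinearOrder α] {u v : ι → α} (h : ¬ u ≤ v) :
    ∃ k, v k < u k := by
  simpa [Pi.le_def] using h

lemma not_comp_succAbove_le {α : Type*} [Preorder α] {n : ℕ} {u v : Fin (n + 1) → α}
    {a : Fin (n + 1)} (h : ¬ u ≤ v) (ha : u a ≤ v a) : ¬ u ∘ a.succAbove ≤ v ∘ a.succAbove := by
  refine fun hle => h fun k => ?_
  rcases a.eq_self_or_eq_succAbove k with rfl | ⟨j, rfl⟩
  exacts [ha, hle j]

lemma add_add_le_sum {n : ℕ} (u : Fin n → ℕ) {a b c : Fin n} (hab : a ≠ b) (hac : a ≠ c)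
    (hbc : b ≠ c) : u a + u b + u c ≤ ∑ k, u k := by
  have := sum_le_sum_of_subset (f := u) (subset_univ {a, b, c})
  rwa [sum_insert (by simp [hab, hac]), sum_pair hbc, ← add_assoc] at this

section LowDegree

variable {n : ℕ} {u v : Fin n → ℕ} {c d : Fin n}

lemma apply_eq_zero_of_not_le_of_sum_le_one (hu : ∑ k, u k ≤ 1) (hc : u c ≠ 0)
    (h : ¬ u ≤ v) : v c = 0 := by
  obtain ⟨k, hk⟩ := exists_apply_lt_of_not_le h
  obtain rfl | hkc := eq_or_ne k c
  · have : u k ≤ ∑ k, u k := single_le_sum (fun _ _ => Nat.zero_le _) (mem_univ k)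
    omega
  · have := add_le_sum (f := u) (fun _ _ => Nat.zero_le _) (mem_univ c) (mem_univ k) hkc.symm
    omega

lemma apply_le_one_of_not_le_of_sum_le_two (hu : ∑ k, u k ≤ 2) (hc : u c = 2)
    (h : ¬ u ≤ v) : v c ≤ 1 := by
  obtain ⟨k, hk⟩ := exists_apply_lt_of_not_le h
  obtain rfl | hkc := eq_or_ne k c
  · omega
  · have := add_le_sum (f := u) (fun _ _ => Nat.zero_le _) (mem_univ c) (mem_univ k) hkc.symm
    omega

lemma apply_eq_zero_or_of_not_le_of_sum_le_two (hu : ∑ k, u k ≤ 2) (hcd : c ≠ d)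
    (hc : u c = 1) (hd : u d = 1) (h : ¬ u ≤ v) : v c = 0 ∨ v d = 0 := by
  obtain ⟨k, hk⟩ := exists_apply_lt_of_not_le h
  obtain rfl | hkc := eq_or_ne k c
  · omega
  obtain rfl | hkd := eq_or_ne k d
  · omega
  have := add_add_le_sum u hcd hkc.symm hkd.symm
  omega

end LowDegree

lemma not_le_iff_fin_two {u v : Fin 2 → ℕ} : ¬ u ≤ v ↔ v 0 < u 0 ∨ v 1 < u 1 := by
  simp only [Pi.le_def, Fin.forall_fin_two]
  omega

section Plane

variable [DecidableEq ι] {Z : Finset ι} {v : ι → Fin 2 → ℕ}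

lemma injOn_apply_of_pairwise_not_le (hZ : (Z : Set ι).Pairwise fun i j => ¬ v i ≤ v j)
    (p : Fin 2) : Set.InjOn (fun i => v i p) Z := by
  intro i hi j hj hij
  by_contra hne
  have hij' := not_le_iff_fin_two.1 (hZ hi hj hne)
  have hji := not_le_iff_fin_two.1 (hZ hj hi (Ne.symm hne))
  fin_cases p <;> simp only [Fin.zero_eta, Fin.mk_one] at hij <;> omega

theorem card_le_of_pairwise_not_le {a w : Fin 2 → ℕ}
    (hZ : (Z : Set ι).Pairwise fun i j => ¬ v i ≤ v j) (hw : ∀ i ∈ Z, w ≤ v i)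
    (ha : ∀ i ∈ Z, ¬ a ≤ v i) : #Z ≤ (a 0 - w 0) + (a 1 - w 1) := by
  have hcoord (p : Fin 2) : #{i ∈ Z | v i p < a p} ≤ a p - w p := by
    simpa using card_le_card_of_injOn (t := Ico (w p) (a p)) (fun i => v i p)
      (fun i hi => by
        obtain ⟨hiZ, hia⟩ := mem_filter.1 hi
        exact mem_Ico.2 ⟨hw i hiZ p, hia⟩)
      ((injOn_apply_of_pairwise_not_le hZ p).mono (coe_subset.2 (filter_subset _ _)))
  calc #Z = #({i ∈ Z | v i 0 < a 0} ∪ {i ∈ Z | v i 1 < a 1}) := by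
        rw [← filter_or, filter_true_of_mem fun i hi => not_le_iff_fin_two.1 (ha i hi)]
    _ ≤ _ := (card_union_le _ _).trans (add_le_add (hcoord 0) (hcoord 1))

theorem card_add_le_sum_add_one {p : Fin 2} {r : ℕ} {m : ι}
    (hZ : (Z : Set ι).Pairwise fun i j => ¬ v i ≤ v j) (hr : ∀ i ∈ Z, r ≤ v i p) (hm : m ∈ Z) :
    #Z + r ≤ ∑ k, v m k + 1 := by
  set w : Fin 2 → ℕ := Pi.single p r
  have hw : ∀ i ∈ Z, w ≤ v i := fun i hi k => by
    rcases eq_or_ne k p with rfl | hk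
    · simpa [w] using hr i hi
    · simp [w, hk]
  have hw01 : w 0 + w 1 = r := by fin_cases p <;> simp [w]
  have hcard := card_le_of_pairwise_not_le (Z := Z.erase m) (a := v m)
    (hZ.mono (coe_subset.2 (erase_subset _ _))) (fun i hi => hw i (mem_of_mem_erase hi))
    (fun i hi => hZ hm (mem_of_mem_erase hi) (ne_of_mem_erase hi).symm)
  have hw0 : w 0 ≤ v m 0 := hw m hm 0
  have hw1 : w 1 ≤ v m 1 := hw m hm 1
  rw [card_erase_of_mem hm] at hcard
  rw [Fin.sum_univ_two]
  omega

end Plane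

def IsBoundedAntichainOn {n : ℕ} (d : ι → ℕ) (I : Finset ι) (s : ι → Fin n → ℕ) : Prop :=
  (I : Set ι).Pairwise (fun i j => ¬ s i ≤ s j) ∧ ∀ i ∈ I, ∑ k, s i k ≤ d i

namespace IsBoundedAntichainOn

variable {n : ℕ} {d : ι → ℕ} {I : Finset ι}

lemma mono {s : ι → Fin n → ℕ} (h : IsBoundedAntichainOn d I s) {J : Finset ι} (hJ : J ⊆ I) :
    IsBoundedAntichainOn d J s :=
  ⟨h.1.mono (coe_subset.2 hJ), fun i hi => h.2 i (hJ hi)⟩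

theorem exists_comp_succAbove {d : ℕ → ℕ} {s : ℕ → Fin (n + 1) → ℕ} {m L : ℕ}
    (h : IsBoundedAntichainOn d (Ico m L) s) (hmL : m + 1 < L) (hm : ∑ k, s m k ≤ 1) :
    ∃ a : Fin (n + 1), IsBoundedAntichainOn d (Ico (m + 1) L) fun i => s i ∘ a.succAbove := by
  have hsub : Ico (m + 1) L ⊆ Ico m L := Ico_subset_Ico_left m.le_succ
  have hhead : ∀ i ∈ Ico (m + 1) L, ¬ s m ≤ s i := fun i hi =>
    h.1 (mem_Ico.2 ⟨le_rfl, by omega⟩) (hsub hi) (by have := (mem_Ico.1 hi).1; omega)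
  obtain ⟨a, ha⟩ := exists_apply_lt_of_not_le (hhead (m + 1) (mem_Ico.2 ⟨le_rfl, hmL⟩))
  have hzero : ∀ i ∈ Ico (m + 1) L, s i a = 0 := fun i hi =>
    apply_eq_zero_of_not_le_of_sum_le_one hm (by omega) (hhead i hi)
  refine ⟨a, fun i hi j hj hij => not_comp_succAbove_le (h.1 (hsub hi) (hsub hj) hij)
    (by rw [hzero i hi, hzero j hj]), fun i hi => ?_⟩
  have := h.2 i (hsub hi)
  rwa [Fin.sum_univ_succAbove _ a, hzero i hi, zero_add] at this

variable [DecidableEq ι] {s : ι → Fin 3 → ℕ} {Z : Finset ι} {a : Fin 3} {r : ℕ} {m : ι}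

theorem card_add_add_le_of_slice (h : IsBoundedAntichainOn d I s) (hZ : Z ⊆ I) {b : Fin 3}
    (hab : a ≠ b) {lo : ℕ} (hr : ∀ i ∈ Z, s i a = r) (hlo : ∀ i ∈ Z, lo ≤ s i b)
    (hm : m ∈ Z) : #Z + r + lo ≤ d m + 1 := by
  obtain ⟨p, rfl⟩ := Fin.exists_succAbove_eq hab.symm
  have hcard := card_add_le_sum_add_one (v := fun i => s i ∘ a.succAbove) (p := p)
    (fun i hi j hj hij => not_comp_succAbove_le (h.1 (hZ hi) (hZ hj) hij)
      (by rw [hr i hi, hr j hj])) hlo hm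
  have hdeg := h.2 m (hZ hm)
  rw [Fin.sum_univ_succAbove _ a, hr m hm] at hdeg
  simp only [Function.comp_apply] at hcard
  omega

theorem card_add_le_of_slice (h : IsBoundedAntichainOn d I s) (hZ : Z ⊆ I)
    (hr : ∀ i ∈ Z, s i a = r) (hm : m ∈ Z) : #Z + r ≤ d m + 1 :=
  (Nat.le_add_right _ _).trans <| h.card_add_add_le_of_slice hZ (a.succAbove_ne 0).symm hr
    (fun _ _ => Nat.zero_le _) hm

end IsBoundedAntichainOn

theorem card_le_sum_of_slice_of_not_le [DecidableEq ι] {s : ι → Fin 3 → ℕ} {Z : Finset ι}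
    {a : Fin 3} {r : ℕ} {y : ι} (hZ : (Z : Set ι).Pairwise fun i j => ¬ s i ≤ s j)
    (hr : ∀ i ∈ Z, s i a = r) (hy : s y a ≤ r) (hyZ : ∀ i ∈ Z, ¬ s y ≤ s i) :
    #Z ≤ ∑ k, s y k := by
  have hcard := card_le_of_pairwise_not_le (v := fun i => s i ∘ a.succAbove) (w := 0)
    (a := s y ∘ a.succAbove)
    (fun i hi j hj hij => not_comp_succAbove_le (hZ hi hj hij) (by rw [hr i hi, hr j hj]))
    (fun _ _ _ => Nat.zero_le _)
    (fun i hi => not_comp_succAbove_le (hyZ i hi) (by rw [hr i hi]; exact hy))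
  rw [Fin.sum_univ_succAbove _ a, Fin.sum_univ_two]
  simp only [Function.comp_apply, Pi.zero_apply, Nat.sub_zero] at hcard
  omega

lemma seven_le_of_fourteen_le_fib {i : ℕ} (h : 14 ≤ fib (i + 1)) : 7 ≤ i := by
  by_contra! hi
  have : fib (i + 1) ≤ fib 7 := Nat.fib_mono (by omega)
  have : fib 7 = 13 := rfl
  omega

lemma subset_Ico_seven {Z : Finset ℕ} (hZ : ∀ i ∈ Z, i < 21) (h : ∀ i ∈ Z, 14 ≤ fib (i + 1)) :
    Z ⊆ Ico 7 21 := fun i hi =>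
  mem_Ico.2 ⟨seven_le_of_fourteen_le_fib (h i hi), hZ i hi⟩

lemma card_le_fourteen {Z : Finset ℕ} (hZ : ∀ i ∈ Z, i < 21)
    (h : ∀ i ∈ Z, #Z ≤ fib (i + 1) + 1) : #Z ≤ 14 := by
  by_contra! hcard
  have := card_le_card (subset_Ico_seven hZ fun i hi => by have := h i hi; omega)
  simp only [Nat.card_Ico] at this
  omega

section Dimension3

variable {s : ℕ → Fin 3 → ℕ}

theorem not_isBoundedAntichainOn_of_apply_le_one {c : Fin 3}
    (hc : ∀ i ∈ Ico 3 21, s i c ≤ 1) :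
    ¬ IsBoundedAntichainOn (fun i => fib (i + 1)) (Ico 3 21) s := by
  intro h
  set X := {i ∈ Ico 3 21 | s i c = 1}
  set Y := {i ∈ Ico 3 21 | ¬ s i c = 1}
  have hXY : #X + #Y = 18 := by simp [X, Y, card_filter_add_card_filter_not]
  have h3 : 3 ∈ Ico 3 21 := by simp
  have hX : #X ≤ 3 := by
    by_cases h3X : 3 ∈ X
    · have : #X + 1 ≤ fib 4 + 1 :=
        h.card_add_le_of_slice (filter_subset _ _) (fun i hi => (mem_filter.1 hi).2) h3X
      have : fib 4 = 3 := rfl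
      omega
    · calc #X ≤ ∑ k, s 3 k :=
            card_le_sum_of_slice_of_not_le (h.1.mono (coe_subset.2 (filter_subset _ _)))
              (fun i hi => (mem_filter.1 hi).2) (hc 3 h3)
              (fun i hi => h.1 h3 (mem_filter.1 hi).1 (ne_of_mem_of_not_mem hi h3X).symm)
        _ ≤ 3 := h.2 3 h3
  have hY : #Y ≤ 14 := card_le_fourteen (fun i hi => (mem_Ico.1 (mem_filter.1 hi).1).2)
    fun y hy => (Nat.le_add_right _ _).trans <|
      h.card_add_le_of_slice (filter_subset _ _) (a := c) (r := 0)
        (fun i hi => by have := hc i (mem_filter.1 hi).1; have := (mem_filter.1 hi).2; omega) hy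
  omega

theorem not_isBoundedAntichainOn_of_apply_eq_zero_or {c d : Fin 3} (hcd : c ≠ d)
    (hc : ∀ i ∈ Ico 3 21, s i c = 0 ∨ s i d = 0) :
    ¬ IsBoundedAntichainOn (fun i => fib (i + 1)) (Ico 3 21) s := by
  intro h
  set X := {i ∈ Ico 3 21 | ¬ s i c = 0}
  set Y := {i ∈ Ico 3 21 | s i c = 0}
  have hXY : #Y + #X = 18 := by simp [X, Y, card_filter_add_card_filter_not]
  have h3 : 3 ∈ Ico 3 21 := by simp
  have hXI : X ⊆ Ico 3 21 := filter_subset _ _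
  have hYI : Y ⊆ Ico 3 21 := filter_subset _ _
  have hXd : ∀ i ∈ X, s i d = 0 := fun i hi =>
    (hc i (mem_filter.1 hi).1).resolve_left (mem_filter.1 hi).2
  have hXc : ∀ i ∈ X, 1 ≤ s i c := fun i hi => Nat.one_le_iff_ne_zero.2 (mem_filter.1 hi).2
  have hYc : ∀ i ∈ Y, s i c = 0 := fun i hi => (mem_filter.1 hi).2
  have hX : ∀ x ∈ X, #X + 1 ≤ fib (x + 1) + 1 := fun x hx =>
    h.card_add_add_le_of_slice hXI hcd.symm hXd hXc hx
  by_cases h3X : 3 ∈ X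
  · have hX3 : #X + 1 ≤ fib 4 + 1 := hX 3 h3X
    have hY : #Y ≤ 14 := card_le_fourteen (fun i hi => (mem_Ico.1 (hYI hi)).2) fun y hy =>
      (Nat.le_add_right _ _).trans <| h.card_add_le_of_slice hYI hYc hy
    have : fib 4 = 3 := rfl
    omega
  have h3Y : 3 ∈ Y := mem_filter.2 ⟨h3, not_not.1 fun h3c => h3X (mem_filter.2 ⟨h3, h3c⟩)⟩
  have hY3 : #Y + 0 ≤ fib 4 + 1 := h.card_add_le_of_slice hYI hYc h3Y
  have hfib4 : fib 4 = 3 := rfl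
  have hX7 : X ⊆ Ico 7 21 := subset_Ico_seven (fun i hi => (mem_Ico.1 (hXI hi)).2)
    fun x hx => by have := hX x hx; omega
  by_cases hYd : ∃ y ∈ Y, s y d = 0
  · -- `s y` vanishes at `c` and `d`, so it exceeds every term of `X` in the third coordinate
    obtain ⟨y, hy, hyd⟩ := hYd
    have hyX : y ∉ X := fun hyX => (mem_filter.1 hyX).2 (hYc y hy)
    have hXy : #X ≤ fib (y + 1) := (card_le_sum_of_slice_of_not_le
      (h.1.mono (coe_subset.2 hXI)) hXd hyd.le fun x hx => h.1 (hYI hy) (hXI hx)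
        (ne_of_mem_of_not_mem hx hyX).symm).trans (h.2 y (hYI hy))
    have hy7 : 7 ≤ y := seven_le_of_fourteen_le_fib (by omega)
    have := card_le_card (insert_subset (mem_Ico.2 ⟨hy7, (mem_Ico.1 (hYI hy)).2⟩) hX7)
    rw [card_insert_of_notMem hyX, Nat.card_Ico] at this
    omega
  · have hY3pos : #Y + 0 + 1 ≤ fib 4 + 1 := h.card_add_add_le_of_slice hYI hcd hYc
      (fun y hy => Nat.one_le_iff_ne_zero.2 fun hyd => hYd ⟨y, hy, hyd⟩) h3Y
    have hX14 : #X ≤ #(Ico 7 21) := card_le_card hX7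
    rw [Nat.card_Ico] at hX14
    omega

theorem not_isBoundedAntichainOn_fib_Ico_two :
    ¬ IsBoundedAntichainOn (fun i => fib (i + 1)) (Ico 2 21) s := by
  intro h
  have hsub : Ico 3 21 ⊆ Ico 2 21 := Ico_subset_Ico_left (by norm_num)
  have h3 : 3 ∈ Ico 3 21 := by simp
  have hdeg : ∑ k, s 2 k ≤ 2 := h.2 2 (by simp)
  have hhead : ∀ i ∈ Ico 3 21, ¬ s 2 ≤ s i := fun i hi =>
    h.1 (by simp) (hsub hi) (by have := (mem_Ico.1 hi).1; omega)
  obtain ⟨c, hc⟩ := exists_apply_lt_of_not_le (hhead 3 h3)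
  by_cases hsum : ∑ k, s 2 k ≤ 1
  · obtain ⟨a, ha⟩ := h.exists_comp_succAbove (by norm_num) hsum
    have hcard := card_add_le_sum_add_one ha.1 (p := 0) (r := 0) (fun _ _ => Nat.zero_le _) h3
    have hdeg3 : ∑ k, (s 3 ∘ a.succAbove) k ≤ 3 := ha.2 3 h3
    rw [Nat.card_Ico] at hcard
    omega
  have hc2 : s 2 c ≤ 2 := (single_le_sum (fun _ _ => Nat.zero_le _) (mem_univ c)).trans hdeg
  obtain hc2 | hc1 : s 2 c = 2 ∨ s 2 c = 1 := by omega
  · exact not_isBoundedAntichainOn_of_apply_le_one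
      (fun i hi => apply_le_one_of_not_le_of_sum_le_two hdeg hc2 (hhead i hi)) (h.mono hsub)
  · obtain ⟨d, hdc, hd⟩ : ∃ d, d ≠ c ∧ s 2 d ≠ 0 := by
      by_contra! hd
      exact hsum (by rw [sum_eq_single c (fun d _ => hd d) (by simp)]; omega)
    have hd1 : s 2 d = 1 := by
      have := add_le_sum (f := s 2) (fun _ _ => Nat.zero_le _) (mem_univ c) (mem_univ d) hdc.symm
      omega
    exact not_isBoundedAntichainOn_of_apply_eq_zero_or hdc.symm
      (fun i hi => apply_eq_zero_or_of_not_le_of_sum_le_two hdeg hdc.symm hc1 hd1 (hhead i hi))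
      (h.mono hsub)

end Dimension3

lemma isBoundedAntichainOn_range_of_fin {n L : ℕ} {d : ℕ → ℕ} {s : Fin L → Fin n → ℕ}
    (hs : ∀ i j : Fin L, i ≠ j → ¬ s i ≤ s j) (hd : ∀ i : Fin L, ∑ k, s i k ≤ d i) :
    IsBoundedAntichainOn d (range L) fun i => if hi : i < L then s ⟨i, hi⟩ else 0 := by
  refine ⟨fun i hi j hj hij => ?_, fun i hi => ?_⟩
  · simp only [coe_range, Set.mem_Iio] at hi hj
    simpa [hi, hj] using hs ⟨i, hi⟩ ⟨j, hj⟩ (Fin.ne_of_val_ne hij)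
  · simpa [mem_range.1 hi] using hd ⟨i, mem_range.1 hi⟩

def antichainWitness : Fin 20 → Fin 5 → ℕ :=
  ![![1,0,0,0,0], ![0,1,0,0,0], ![0,0,2,0,0], ![0,0,1,2,0], ![0,0,1,1,1], ![0,0,1,0,2],
    ![0,0,0,13,0], ![0,0,0,12,1], ![0,0,0,11,2], ![0,0,0,10,3], ![0,0,0,9,4], ![0,0,0,8,5],
    ![0,0,0,7,6], ![0,0,0,6,7], ![0,0,0,5,8], ![0,0,0,4,9], ![0,0,0,3,10], ![0,0,0,2,11],
    ![0,0,0,1,12], ![0,0,0,0,13]]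

lemma antichainWitness_not_le :
    ∀ i j : Fin 20, i ≠ j → ¬ antichainWitness i ≤ antichainWitness j := by
  simp only [Pi.le_def]
  decide

lemma antichainWitness_sum_le : ∀ i : Fin 20, ∑ k, antichainWitness i k ≤ fib (i.val + 1) := by
  decide

/-- The maximal length of an antichain sequence in `ℤ_{≥0}^5` (componentwise order)
with `deg(s_i) ≤ Fib_i` is equal to `20`. -/
theorem maximal_antichain_length_dim5_h1 :
    IsGreatest {L : ℕ | ∃ s : Fin L → (Fin 5 → ℕ),
      (∀ i j : Fin L, i ≠ j → ¬ s i ≤ s j) ∧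
      (∀ i : Fin L, (∑ k, s i k) ≤ Nat.fib (i.val + 1))} 20 := by
  refine ⟨⟨antichainWitness, antichainWitness_not_le, antichainWitness_sum_le⟩, ?_⟩
  rintro L ⟨s, hs, hd⟩
  by_contra! hL
  have h0 := (isBoundedAntichainOn_range_of_fin (d := fun i => fib (i + 1)) hs hd).mono
    (show Ico 0 21 ⊆ range L from fun i hi => mem_range.2 (by have := (mem_Ico.1 hi).2; omega))
  obtain ⟨a, h1⟩ := h0.exists_comp_succAbove (by norm_num) (by simpa using h0.2 0 (by simp))
  obtain ⟨b, h2⟩ := h1.exists_comp_succAbove (by norm_num) (by simpa using h1.2 1 (by simp))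
  exact not_isBoundedAntichainOn_fib_Ico_two h2
end
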